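/- arXiv:1811.07450 — 4 statements merged into one kernel-verified Lean document; each statement's English description precedes it below -/
import Mathlib

section
/- Let A, C > 0 and let (K_λ) be a family of bounded measurable real-valued functions on 𝔹 × 𝔹, indexed by λ ∈ ℂ with |λ| ≥ 1, such that ‖K_λ‖_∞ ≤ C|λ|³ and K_λ(x,y) = 0 whenever ‖x − y‖ > A|λ|^{-1}. Then for every f₁ ∈ L^q(𝔹) with q > 4/3 and every f₂ ∈ L²(𝔹), ∫∫ K_λ(x,y) f₁(x) f₂(y) dx dy → 0 as |λ| → ∞. -/
open MeasureTheory Metric Set Filter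
open scoped ENNReal Topology

noncomputable section

/-- `ℂ² ≅ ℝ⁴` with its Euclidean structure. -/
abbrev E4 := EuclideanSpace ℝ (Fin 4)

/-- The unit ball `𝔹` of `ℂ² ≅ ℝ⁴`. -/
def unitBall : Set E4 := Metric.ball 0 1

/-- The normalized Lebesgue measure on the unit ball `𝔹`. -/
def nu : Measure E4 := (volume unitBall)⁻¹ • (volume.restrict unitBall)

/-- The filter `|λ| → ∞` on `ℂ`. -/
def normAtTop : Filter ℂ := Filter.comap (fun lam : ℂ => ‖lam‖) Filter.atTop

/-!
`K_λ` is bounded by `C|λ|³` and vanishes off the band `‖x - y‖ ≤ δ := A|λ|⁻¹`, so the form is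
dominated by `C|λ|³ ∫∫ 1_{‖x - y‖ ≤ δ} |f₁(x)| |f₂(y)|`. Every section of the band is a ball of
`ν`-measure at most `δ⁴`, and Young's inequality (Hölder with three factors) bounds the double
integral by `(δ⁴)^(2 - 1/p - 1/2) ‖f₁‖_p ‖f₂‖_2` whenever `p ≤ 2`. For `p = min q 2` the total is
`O(|λ|^(4/p - 3))`, which tends to `0` precisely because `p > 4/3`.
-/

section

variable {α : Type*} [MeasurableSpace α] {μ : Measure α}

theorem lintegral_rpow_mul_rpow_mul_rpow_le {f g h : α → ℝ≥0∞}
    (hf : AEMeasurable f μ) (hg : AEMeasurable g μ) (hh : AEMeasurable h μ) {a b c : ℝ}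
    (ha : 0 ≤ a) (hb : 0 ≤ b) (hc : 0 ≤ c) (habc : a + b + c = 1) :
    ∫⁻ x, f x ^ a * g x ^ b * h x ^ c ∂μ
      ≤ (∫⁻ x, f x ∂μ) ^ a * (∫⁻ x, g x ∂μ) ^ b * (∫⁻ x, h x ∂μ) ^ c := by
  have := ENNReal.lintegral_prod_norm_pow_le (μ := μ) Finset.univ (f := ![f, g, h])
    (p := ![a, b, c]) (by intro i _; fin_cases i <;> assumption)
    (by simpa [Fin.sum_univ_three] using habc) (by intro i _; fin_cases i <;> assumption)
  simpa [Fin.prod_univ_three] using this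

variable [SFinite μ]

theorem lintegral_indicator_mul_fst_le {S : Set (α × α)} (hS : MeasurableSet S) {d : ℝ≥0∞}
    (hsection : ∀ x, μ (Prod.mk x ⁻¹' S) ≤ d) {F : α → ℝ≥0∞} (hF : AEMeasurable F μ) :
    ∫⁻ z, S.indicator 1 z * F z.1 ∂μ.prod μ ≤ d * ∫⁻ x, F x ∂μ := by
  have hSx (x : α) : ∫⁻ y, S.indicator 1 (x, y) ∂μ = μ (Prod.mk x ⁻¹' S) := by
    simp_rw [← indicator_comp_right (Prod.mk x) (g := (1 : α × α → ℝ≥0∞))]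
    exact lintegral_indicator_one (measurable_prodMk_left hS)
  calc ∫⁻ z, S.indicator 1 z * F z.1 ∂μ.prod μ
      = ∫⁻ x, μ (Prod.mk x ⁻¹' S) * F x ∂μ := by
        rw [lintegral_prod (fun z => S.indicator 1 z * F z.1)
          ((measurable_one.indicator hS).aemeasurable.mul hF.comp_fst)]
        refine lintegral_congr fun x => ?_
        rw [← hSx]
        exact lintegral_mul_const (F x) ((measurable_one.indicator hS).comp measurable_prodMk_left)
    _ ≤ ∫⁻ x, d * F x ∂μ := lintegral_mono fun x => mul_le_mul_left (hsection x) _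
    _ = d * ∫⁻ x, F x ∂μ := lintegral_const_mul'' d hF

theorem lintegral_indicator_mul_snd_le {S : Set (α × α)} (hS : MeasurableSet S) {d : ℝ≥0∞}
    (hsection : ∀ y, μ ((fun x => (x, y)) ⁻¹' S) ≤ d) {G : α → ℝ≥0∞} (hG : AEMeasurable G μ) :
    ∫⁻ z, S.indicator 1 z * G z.2 ∂μ.prod μ ≤ d * ∫⁻ y, G y ∂μ := by
  rw [← lintegral_prod_swap]
  exact lintegral_indicator_mul_fst_le (S := Prod.swap ⁻¹' S) (measurable_swap hS) hsection hG

theorem lintegral_indicator_mul_mul_le {S : Set (α × α)} (hS : MeasurableSet S) {d : ℝ≥0∞}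
    (hfst : ∀ x, μ (Prod.mk x ⁻¹' S) ≤ d) (hsnd : ∀ y, μ ((fun x => (x, y)) ⁻¹' S) ≤ d)
    {F G : α → ℝ≥0∞} (hF : AEMeasurable F μ) (hG : AEMeasurable G μ) {p s : ℝ}
    (hp : 1 ≤ p) (hs : 1 < s) (hps : 1 ≤ p⁻¹ + s⁻¹) :
    ∫⁻ z, S.indicator 1 z * (F z.1 * G z.2) ∂μ.prod μ
      ≤ d ^ (2 - p⁻¹ - s⁻¹) * (∫⁻ x, F x ^ p ∂μ) ^ p⁻¹ * (∫⁻ y, G y ^ s ∂μ) ^ s⁻¹ := by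
  set a := p⁻¹ + s⁻¹ - 1
  set b := 1 - s⁻¹
  set c := 1 - p⁻¹
  have ha : 0 ≤ a := by linarith
  have hb : 0 < b := sub_pos.2 (inv_lt_one_of_one_lt₀ hs)
  have hc : 0 ≤ c := sub_nonneg.2 (inv_le_one_of_one_le₀ hp)
  have hab : a + b = p⁻¹ := by simp only [a, b]; ring
  have hac : a + c = s⁻¹ := by simp only [a, c]; ring
  have hbc : b + c = 2 - p⁻¹ - s⁻¹ := by simp only [b, c]; ring
  have hind : Measurable (S.indicator (1 : α × α → ℝ≥0∞)) := measurable_one.indicator hS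
  have hFp : AEMeasurable (fun x => F x ^ p) μ := hF.pow_const p
  have hGs : AEMeasurable (fun y => G y ^ s) μ := hG.pow_const s
  -- `F` and `G` reach total powers `p (a + b) = 1` and `s (a + c) = 1`, `1_S` the power `b + c`.
  have hsplit (z : α × α) : S.indicator 1 z * (F z.1 * G z.2)
      = (F z.1 ^ p * G z.2 ^ s) ^ a * (S.indicator 1 z * F z.1 ^ p) ^ b
        * (S.indicator 1 z * G z.2 ^ s) ^ c := by
    by_cases hz : z ∈ S
    · simp only [indicator_of_mem hz, Pi.one_apply, one_mul]
      rw [ENNReal.mul_rpow_of_nonneg _ _ ha, ← ENNReal.rpow_mul, ← ENNReal.rpow_mul,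
        ← ENNReal.rpow_mul, ← ENNReal.rpow_mul]
      calc F z.1 * G z.2 = F z.1 ^ (p * a + p * b) * G z.2 ^ (s * a + s * c) := by
            rw [← mul_add, ← mul_add, hab, hac, mul_inv_cancel₀ (by positivity),
              mul_inv_cancel₀ (by positivity), ENNReal.rpow_one, ENNReal.rpow_one]
        _ = _ := by
          rw [ENNReal.rpow_add_of_nonneg _ _ (by positivity) (by positivity),
            ENNReal.rpow_add_of_nonneg _ _ (by positivity) (by positivity)]
          ring
    · simp [indicator_of_notMem hz, ENNReal.zero_rpow_of_pos hb]
  calc ∫⁻ z, S.indicator 1 z * (F z.1 * G z.2) ∂μ.prod μ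
      ≤ (∫⁻ z, F z.1 ^ p * G z.2 ^ s ∂μ.prod μ) ^ a
        * (∫⁻ z, S.indicator 1 z * F z.1 ^ p ∂μ.prod μ) ^ b
        * (∫⁻ z, S.indicator 1 z * G z.2 ^ s ∂μ.prod μ) ^ c := by
        simp_rw [hsplit]
        exact lintegral_rpow_mul_rpow_mul_rpow_le (hFp.comp_fst.mul hGs.comp_snd)
          (hind.aemeasurable.mul hFp.comp_fst) (hind.aemeasurable.mul hGs.comp_snd)
          ha hb.le hc (by ring)
    _ ≤ ((∫⁻ x, F x ^ p ∂μ) * ∫⁻ y, G y ^ s ∂μ) ^ a * (d * ∫⁻ x, F x ^ p ∂μ) ^ b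
        * (d * ∫⁻ y, G y ^ s ∂μ) ^ c := by
        rw [lintegral_prod_mul hFp hGs]
        gcongr
        · exact lintegral_indicator_mul_fst_le hS hfst hFp
        · exact lintegral_indicator_mul_snd_le hS hsnd hGs
    _ = _ := by
        rw [← hbc, ← hab, ← hac]
        simp only [ENNReal.mul_rpow_of_nonneg _ _ ha, ENNReal.mul_rpow_of_nonneg _ _ hb.le,
          ENNReal.mul_rpow_of_nonneg _ _ hc, ENNReal.rpow_add_of_nonneg _ _ ha hb.le,
          ENNReal.rpow_add_of_nonneg _ _ ha hc, ENNReal.rpow_add_of_nonneg _ _ hb.le hc]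
        ring

theorem enorm_integral_integral_mul_mul_le {S : Set (α × α)} (hS : MeasurableSet S) {d : ℝ≥0∞}
    (hfst : ∀ x, μ (Prod.mk x ⁻¹' S) ≤ d) (hsnd : ∀ y, μ ((fun x => (x, y)) ⁻¹' S) ≤ d)
    {K : α → α → ℝ} {M : ℝ} (hK : ∀ x y, |K x y| ≤ M) (hKS : ∀ x y, (x, y) ∉ S → K x y = 0)
    {f g : α → ℝ} (hf : AEMeasurable f μ) (hg : AEMeasurable g μ) {p s : ℝ}
    (hp : 1 ≤ p) (hs : 1 < s) (hps : 1 ≤ p⁻¹ + s⁻¹) :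
    ‖∫ x, ∫ y, K x y * f x * g y ∂μ ∂μ‖ₑ
      ≤ ENNReal.ofReal M * d ^ (2 - p⁻¹ - s⁻¹) * eLpNorm f (ENNReal.ofReal p) μ
        * eLpNorm g (ENNReal.ofReal s) μ := by
  have hpt (x y : α) : ‖K x y * f x * g y‖ₑ
      ≤ ENNReal.ofReal M * (S.indicator 1 (x, y) * (‖f x‖ₑ * ‖g y‖ₑ)) := by
    by_cases hxy : (x, y) ∈ S
    · rw [indicator_of_mem hxy, Pi.one_apply, one_mul, enorm_mul, enorm_mul, mul_assoc,
        Real.enorm_eq_ofReal_abs]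
      gcongr
      exact hK x y
    · simp [hKS x y hxy]
  have hLp {r : ℝ} (hr : 0 < r) {h : α → ℝ} :
      eLpNorm h (ENNReal.ofReal r) μ = (∫⁻ x, ‖h x‖ₑ ^ r ∂μ) ^ r⁻¹ := by
    rw [eLpNorm_eq_lintegral_rpow_enorm_toReal (by simpa using hr) ENNReal.ofReal_ne_top,
      ENNReal.toReal_ofReal hr.le, one_div]
  calc ‖∫ x, ∫ y, K x y * f x * g y ∂μ ∂μ‖ₑ
      ≤ ∫⁻ x, ∫⁻ y, ‖K x y * f x * g y‖ₑ ∂μ ∂μ :=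
        (enorm_integral_le_lintegral_enorm _).trans
          (lintegral_mono fun x => enorm_integral_le_lintegral_enorm _)
    _ ≤ ∫⁻ x, ∫⁻ y, ENNReal.ofReal M * (S.indicator 1 (x, y) * (‖f x‖ₑ * ‖g y‖ₑ)) ∂μ ∂μ :=
        lintegral_mono fun x => lintegral_mono fun y => hpt x y
    _ = ENNReal.ofReal M * ∫⁻ z, S.indicator 1 z * (‖f z.1‖ₑ * ‖g z.2‖ₑ) ∂μ.prod μ := by
        simp_rw [lintegral_const_mul' _ _ ENNReal.ofReal_ne_top]
        rw [lintegral_prod (fun z => S.indicator 1 z * (‖f z.1‖ₑ * ‖g z.2‖ₑ))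
          ((measurable_one.indicator hS).aemeasurable.mul
            (hf.enorm.comp_fst.mul hg.enorm.comp_snd))]
    _ ≤ ENNReal.ofReal M * (d ^ (2 - p⁻¹ - s⁻¹) * (∫⁻ x, ‖f x‖ₑ ^ p ∂μ) ^ p⁻¹
          * (∫⁻ y, ‖g y‖ₑ ^ s ∂μ) ^ s⁻¹) := by
        gcongr
        exact lintegral_indicator_mul_mul_le hS hfst hsnd hf.enorm hg.enorm hp hs hps
    _ = _ := by rw [hLp (by linarith), hLp (by linarith)]; ring

end

theorem tendsto_pow_three_mul_rpow_atTop (A : ℝ) {e : ℝ} (he : 3 / 4 < e) :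
    Tendsto (fun t : ℝ => t ^ 3 * ((A * t⁻¹) ^ 4) ^ e) atTop (𝓝 0) := by
  have hlim : Tendsto (fun t : ℝ => (A ^ 4) ^ e * t ^ (-(4 * e - 3))) atTop (𝓝 0) := by
    simpa using (tendsto_rpow_neg_atTop (by linarith : 0 < 4 * e - 3)).const_mul ((A ^ 4) ^ e)
  refine hlim.congr' ?_
  filter_upwards [eventually_gt_atTop 0] with t ht
  rw [mul_pow, inv_pow, Real.mul_rpow (by positivity) (by positivity),
    Real.inv_rpow (by positivity), ← Real.rpow_natCast t 4, ← Real.rpow_mul ht.le, ← Real.rpow_neg ht.le, ← Real.rpow_natCast t 3]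
  rw [mul_left_comm, ← Real.rpow_add ht]
  congr 2
  push_cast
  ring

theorem volume_unitBall_ne_zero : volume unitBall ≠ 0 := (measure_ball_pos _ _ one_pos).ne'

theorem volume_unitBall_ne_top : volume unitBall ≠ ⊤ := measure_ball_lt_top.ne

instance : IsProbabilityMeasure nu :=
  ⟨by
    rw [nu, Measure.smul_apply, smul_eq_mul, Measure.restrict_apply_univ]
    exact ENNReal.inv_mul_cancel volume_unitBall_ne_zero volume_unitBall_ne_top⟩

theorem nu_closedBall_le (z : E4) {δ : ℝ} (hδ : 0 ≤ δ) :
    nu (closedBall z δ) ≤ ENNReal.ofReal (δ ^ 4) :=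
  calc nu (closedBall z δ) ≤ (volume unitBall)⁻¹ * volume (closedBall z δ) := by
        rw [nu, Measure.smul_apply, smul_eq_mul, Measure.restrict_apply measurableSet_closedBall]
        gcongr
        exact inter_subset_left
    _ = ENNReal.ofReal (δ ^ 4) := by
        rw [Measure.addHaar_closedBall _ z hδ, finrank_euclideanSpace_fin, ← unitBall,
          mul_left_comm, ENNReal.inv_mul_cancel volume_unitBall_ne_zero volume_unitBall_ne_top,
          mul_one]

theorem norm_integral_integral_le_of_dist_le {δ M p : ℝ} (hδ : 0 ≤ δ) (hM : 0 ≤ M)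
    {K : E4 → E4 → ℝ} (hK : ∀ x y, |K x y| ≤ M) (hKS : ∀ x y, δ < ‖x - y‖ → K x y = 0)
    (hp : 1 ≤ p) (hp2 : p ≤ 2) {f g : E4 → ℝ} (hf : MemLp f (ENNReal.ofReal p) nu)
    (hg : MemLp g 2 nu) :
    ‖∫ x, ∫ y, K x y * f x * g y ∂nu ∂nu‖
      ≤ M * (δ ^ 4) ^ (3 / 2 - p⁻¹) * (eLpNorm f (ENNReal.ofReal p) nu).toReal
        * (eLpNorm g 2 nu).toReal := by
  set S := {z : E4 × E4 | ‖z.1 - z.2‖ ≤ δ}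
  have hS : MeasurableSet S := (isClosed_le (by fun_prop) continuous_const).measurableSet
  have hfst (x : E4) : nu (Prod.mk x ⁻¹' S) ≤ ENNReal.ofReal (δ ^ 4) := by
    convert nu_closedBall_le x hδ using 2
    ext y
    simp [S, dist_eq_norm, norm_sub_rev]
  have hsnd (y : E4) : nu ((fun x => (x, y)) ⁻¹' S) ≤ ENNReal.ofReal (δ ^ 4) := by
    convert nu_closedBall_le y hδ using 2
    ext x
    simp [S, dist_eq_norm]
  have hp_inv : p⁻¹ ≤ 1 := inv_le_one_of_one_le₀ hp
  have hps : 1 ≤ p⁻¹ + 2⁻¹ := by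
    have : (2 : ℝ)⁻¹ ≤ p⁻¹ := inv_anti₀ (by positivity) hp2
    linarith
  have h := enorm_integral_integral_mul_mul_le hS hfst hsnd hK
    (fun x y hxy => hKS x y (not_le.1 hxy)) hf.1.aemeasurable hg.1.aemeasurable hp one_lt_two hps
  rw [ENNReal.ofReal_ofNat, show (2 : ℝ) - p⁻¹ - 2⁻¹ = 3 / 2 - p⁻¹ by ring,
    ENNReal.ofReal_rpow_of_nonneg (by positivity) (by linarith)] at h
  have h' := ENNReal.toReal_mono (by finiteness [hf.eLpNorm_ne_top, hg.eLpNorm_ne_top]) h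
  simpa [toReal_enorm, ENNReal.toReal_mul, ENNReal.toReal_ofReal hM,
    ENNReal.toReal_ofReal (by positivity : (0 : ℝ) ≤ (δ ^ 4) ^ (3 / 2 - p⁻¹))] using h'

theorem stmt2_general (A C : ℝ) (hA : 0 < A) (hC : 0 < C)
    (K : ℂ → E4 → E4 → ℝ)
    (hbound : ∀ lam : ℂ, 1 ≤ ‖lam‖ → ∀ x y : E4, |K lam x y| ≤ C * ‖lam‖ ^ 3)
    (hsupp : ∀ lam : ℂ, 1 ≤ ‖lam‖ → ∀ x y : E4, A * ‖lam‖⁻¹ < ‖x - y‖ → K lam x y = 0) :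
    ∀ q : ℝ, 4 / 3 < q →
      ∀ f₁ f₂ : E4 → ℝ, MemLp f₁ (ENNReal.ofReal q) nu → MemLp f₂ 2 nu →
        Tendsto (fun lam : ℂ => ∫ x, ∫ y, K lam x y * f₁ x * f₂ y ∂nu ∂nu)
          normAtTop (𝓝 0) := by
  intro q hq f₁ f₂ hf₁ hf₂
  set p := min q 2
  have hp : 4 / 3 < p := lt_min hq (by norm_num)
  have hf₁p : MemLp f₁ (ENNReal.ofReal p) nu :=
    hf₁.mono_exponent (ENNReal.ofReal_le_ofReal (min_le_left _ _))
  have he : 3 / 4 < 3 / 2 - p⁻¹ := by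
    have : p⁻¹ < (4 / 3)⁻¹ := inv_strictAnti₀ (by norm_num) hp
    norm_num at this ⊢
    linarith
  have hnorm : Tendsto (fun lam : ℂ => ‖lam‖) normAtTop atTop := tendsto_comap
  have hlim := (((tendsto_pow_three_mul_rpow_atTop A he).comp hnorm).const_mul C).mul_const
    (eLpNorm f₁ (ENNReal.ofReal p) nu).toReal |>.mul_const (eLpNorm f₂ 2 nu).toReal
  refine squeeze_zero_norm' ?_ (by simpa using hlim)
  filter_upwards [hnorm.eventually_ge_atTop 1] with lam hlam
  have := norm_integral_integral_le_of_dist_le (by positivity) (by positivity) (hbound lam hlam)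
    (hsupp lam hlam) (by linarith) (min_le_right _ _) hf₁p hf₂
  linarith

/-- if `‖K_λ‖_∞ ≤ C|λ|³` and `K_λ(x,y) = 0` for `‖x-y‖ > A|λ|⁻¹`, then
`∫∫ K_λ(x,y) f₁(x) f₂(y) → 0` as `|λ| → ∞`, for every `f₁ ∈ L^q(𝔹)` with `q > 4/3` and
every `f₂ ∈ L²(𝔹)`. -/
theorem stmt2 (A C : ℝ) (hA : 0 < A) (hC : 0 < C)
    (K : ℂ → E4 → E4 → ℝ)
    (hmeas : ∀ lam : ℂ, Measurable fun p : E4 × E4 => K lam p.1 p.2)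
    (hbound : ∀ lam : ℂ, 1 ≤ ‖lam‖ → ∀ x y : E4, |K lam x y| ≤ C * ‖lam‖ ^ 3)
    (hsupp : ∀ lam : ℂ, 1 ≤ ‖lam‖ → ∀ x y : E4, A * ‖lam‖⁻¹ < ‖x - y‖ → K lam x y = 0) :
    ∀ q : ℝ, 4 / 3 < q →
      ∀ f₁ f₂ : E4 → ℝ, MemLp f₁ (ENNReal.ofReal q) nu → MemLp f₂ 2 nu →
        Tendsto (fun lam : ℂ => ∫ x, ∫ y, K lam x y * f₁ x * f₂ y ∂nu ∂nu)
          normAtTop (𝓝 0) :=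
  stmt2_general A C hA hC K hbound hsupp
end
end

section
/- Let c > 0 be fixed and let ζ₀ be a point in the open sector S. Then there is a constant c_{ζ₀} > 0, depending only on η, c and ζ₀, such that ∫₀^∞ H(l ζ₀) dl ≤ c_{ζ₀} for every c-admissible positive harmonic function H on S'. -/
open MeasureTheory Filter Set
open scoped ENNReal Topology

noncomputable section

/-- `η = a + ib`. -/
def etaC (a b : ℝ) : ℂ := (a : ℂ) + (b : ℂ) * Complex.I

/-- The open sector `S = {u+iv : v > 0, bu + av > 0}`. -/
def sectorS (a b : ℝ) : Set ℂ := {z : ℂ | 0 < z.im ∧ 0 < b * z.re + a * z.im}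

/-- The larger sector `S' = {u+iv : v > -log 3, bu + av > -log 3}`. -/
def sectorS' (a b : ℝ) : Set ℂ :=
  {z : ℂ | -Real.log 3 < z.im ∧ -Real.log 3 < b * z.re + a * z.im}

/-- A real-valued function on `ℂ` is harmonic on a set: it is `C²` there and its Laplacian
(the sum of the second derivatives in the directions `1` and `i`) vanishes. -/
def HarmonicOnSet (f : ℂ → ℝ) (U : Set ℂ) : Prop :=
  ContDiffOn ℝ 2 f U ∧
    ∀ z ∈ U, (iteratedFDeriv ℝ 2 f z) ![1, 1] + (iteratedFDeriv ℝ 2 f z) ![Complex.I, Complex.I] = 0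

/-- A positive harmonic function on the sector `S'`. -/
def PosHarmonic (a b : ℝ) (H : ℂ → ℝ) : Prop :=
  (∀ z ∈ sectorS' a b, 0 < H z) ∧ HarmonicOnSet H (sectorS' a b)

/-- The exponent `γ = π/θ₀`, where `θ₀ = arg(-η̄) ∈ (0,π)` is the opening angle of `S`. -/
def gammaExp (a b : ℝ) : ℝ := Real.pi / Complex.arg (((-a : ℝ) : ℂ) + (b : ℂ) * Complex.I)

/-- `c`-admissibility of a function `H` on `S'`: there is `H̃` with `H̃ ∘ Φ = H` on `S`
(where `Φ(ζ) = ζ^γ`), continuous on the closed upper half-plane, bounded by `c` on `ℝ`,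
with `∫_ℝ H̃(t)|t|^{-1+1/γ} dt ≤ c`, and satisfying the Poisson formula. -/
def Admissible (a b c : ℝ) (H : ℂ → ℝ) : Prop :=
  ∃ Ht : ℂ → ℝ,
    ContinuousOn Ht {z : ℂ | 0 ≤ z.im} ∧
    (∀ ζ ∈ sectorS a b, Ht (ζ ^ ((gammaExp a b : ℝ) : ℂ)) = H ζ) ∧
    (∀ t : ℝ, Ht (t : ℂ) ≤ c) ∧
    Integrable (fun t : ℝ => Ht (t : ℂ) * |t| ^ (-1 + 1 / gammaExp a b)) ∧
    (∫ t : ℝ, Ht (t : ℂ) * |t| ^ (-1 + 1 / gammaExp a b)) ≤ c ∧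
    (∀ U V : ℝ, 0 < V →
      Ht ((U : ℂ) + (V : ℂ) * Complex.I) =
        (1 / Real.pi) * ∫ t : ℝ, Ht (t : ℂ) * (V / (V ^ 2 + (t - U) ^ 2)))

/-- The point `-η̄ b⁻¹ s + l` on the half-line `Λ_{1,s}`. -/
def lam1pt (a b s l : ℝ) : ℂ :=
  -(starRingEnd ℂ (etaC a b)) * ((s / b : ℝ) : ℂ) + (l : ℂ)

/-- The point `b⁻¹ s - η̄ l` on the half-line `Λ_{2,s}`. -/
def lam2pt (a b s l : ℝ) : ℂ :=
  ((s / b : ℝ) : ℂ) - (starRingEnd ℂ (etaC a b)) * (l : ℂ)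

/-!
For `l > 0` we have `(l ζ₀) ^ γ = l ^ γ w₀` with `w₀ = ζ₀ ^ γ` in the upper half-plane, so the
Poisson formula writes `H (l ζ₀)` as the integral of the boundary values `H̃ t` against the
Poisson kernel at `l ^ γ w₀`. These boundary values are nonnegative, since `H̃` is continuous on
the closed half-plane and positive on the open one, which is `Φ(S)`. By Tonelli it remains to
bound `∫₀^∞ P(l ^ γ w₀, t) dl`: the kernel is at most `2 / |t|` while `l ^ γ |w₀| ≤ |t| / 2` and at
most `1 / (l ^ γ Im w₀)` beyond, which gives `K |t| ^ (-1 + 1/γ)` because `γ > 1`. Admissibility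
bounds the resulting weighted integral of `H̃` by `c`.
-/

lemma Real.pos_of_sin_pos {x : ℝ} (hx : 0 < Real.sin x) (h : -Real.pi ≤ x) : 0 < x := by
  by_contra! h'
  linarith [Real.sin_nonpos_of_nonpos_of_neg_pi_le h' h]

namespace Complex

lemma arg_pos_of_im_pos {z : ℂ} (hz : 0 < z.im) : 0 < arg z := by
  have hz0 : z ≠ 0 := by rintro rfl; simp at hz
  refine Real.pos_of_sin_pos ?_ (neg_pi_lt_arg z).le
  rw [sin_arg]
  exact div_pos hz (norm_pos_iff.mpr hz0)

lemma ofReal_mul_cpow_ofReal {l : ℝ} (hl : 0 < l) (z : ℂ) (y : ℝ) :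
    ((l : ℂ) * z) ^ (y : ℂ) = ((l ^ y : ℝ) : ℂ) * z ^ (y : ℂ) := by
  rcases eq_or_ne z 0 with rfl | hz
  · rcases eq_or_ne y 0 with rfl | hy
    · simp
    · simp [zero_cpow (ofReal_ne_zero.mpr hy)]
  · rw [cpow_def_of_ne_zero (mul_ne_zero (ofReal_ne_zero.mpr hl.ne') hz),
      cpow_def_of_ne_zero hz, log_ofReal_mul hl hz, add_mul, exp_add, ofReal_cpow hl.le,
      cpow_def_of_ne_zero (ofReal_ne_zero.mpr hl.ne'), ofReal_log hl.le]

end Complex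

open Complex

def openingAngle (a b : ℝ) : ℝ := arg (((-a : ℝ) : ℂ) + (b : ℂ) * I)

section Sector

variable {a b : ℝ}

lemma openingAngle_pos (hb : 0 < b) : 0 < openingAngle a b :=
  arg_pos_of_im_pos (by simpa using hb)

lemma openingAngle_lt_pi (hb : 0 < b) : openingAngle a b < Real.pi :=
  arg_lt_pi_iff.mpr (Or.inr (by simpa using hb.ne'))

lemma gammaExp_mul_openingAngle (hb : 0 < b) : gammaExp a b * openingAngle a b = Real.pi :=
  div_mul_cancel₀ _ (openingAngle_pos hb).ne'

lemma one_lt_gammaExp (hb : 0 < b) : 1 < gammaExp a b :=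
  (one_lt_div (openingAngle_pos hb)).mpr (openingAngle_lt_pi hb)

lemma mul_re_add_mul_im_eq (z : ℂ) :
    b * z.re + a * z.im =
      ‖((-a : ℝ) : ℂ) + (b : ℂ) * I‖ * ‖z‖ * Real.sin (openingAngle a b - arg z) := by
  have hre := norm_mul_cos_arg (((-a : ℝ) : ℂ) + (b : ℂ) * I)
  have him := norm_mul_sin_arg (((-a : ℝ) : ℂ) + (b : ℂ) * I)
  simp only [add_re, ofReal_re, mul_re, I_re, I_im, ofReal_im, add_im, mul_im] at hre him
  rw [openingAngle, Real.sin_sub, ← norm_mul_cos_arg z, ← norm_mul_sin_arg z]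
  linear_combination (‖z‖ * Real.sin (arg z)) * hre - (‖z‖ * Real.cos (arg z)) * him

lemma mem_sectorS_iff (hb : 0 < b) {z : ℂ} :
    z ∈ sectorS a b ↔ 0 < arg z ∧ arg z < openingAngle a b := by
  have hθ := openingAngle_pos (a := a) hb
  have hθπ := openingAngle_lt_pi (a := a) hb
  have hm : 0 < ‖((-a : ℝ) : ℂ) + (b : ℂ) * I‖ := norm_pos_iff.mpr fun h => by
    simpa [hb.ne'] using congrArg im h
  simp only [sectorS, Set.mem_ofPred_eq, mul_re_add_mul_im_eq, ← norm_mul_sin_arg z]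
  constructor
  · rintro ⟨him, hlin⟩
    have hpos : 0 < arg z := Real.pos_of_sin_pos (pos_of_mul_pos_right him (norm_nonneg z))
      (neg_pi_lt_arg z).le
    refine ⟨hpos, sub_pos.mp (Real.pos_of_sin_pos ?_ (by linarith [arg_le_pi z]))⟩
    exact pos_of_mul_pos_right hlin (by positivity)
  · rintro ⟨hpos, hlt⟩
    have hz : 0 < ‖z‖ := norm_pos_iff.mpr fun h => by simp [h] at hpos
    exact ⟨mul_pos hz (Real.sin_pos_of_pos_of_lt_pi hpos (by linarith)),
      mul_pos (mul_pos hm hz) (Real.sin_pos_of_pos_of_lt_pi (by linarith) (by linarith))⟩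

lemma ofReal_mul_mem_sectorS {l : ℝ} (hl : 0 < l) {z : ℂ} (hz : z ∈ sectorS a b) :
    (l : ℂ) * z ∈ sectorS a b := by
  obtain ⟨him, hlin⟩ := hz
  simp only [sectorS, Set.mem_ofPred_eq, re_ofReal_mul, im_ofReal_mul]
  exact ⟨mul_pos hl him, by nlinarith⟩

lemma sectorS_subset_sectorS' : sectorS a b ⊆ sectorS' a b := fun _ hz => by
  have h3 : 0 < Real.log 3 := Real.log_pos (by norm_num)
  exact ⟨by linarith [hz.1], by linarith [hz.2]⟩

lemma im_cpow_gammaExp_pos (hb : 0 < b) {z : ℂ} (hz : z ∈ sectorS a b) :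
    0 < (z ^ (gammaExp a b : ℂ)).im := by
  obtain ⟨hpos, hlt⟩ := (mem_sectorS_iff hb).mp hz
  have hγ := one_lt_gammaExp (a := a) hb
  have hz0 : z ≠ 0 := by rintro rfl; simp at hpos
  rw [cpow_ofReal_im]
  refine mul_pos (Real.rpow_pos_of_pos (norm_pos_iff.mpr hz0) _)
    (Real.sin_pos_of_pos_of_lt_pi (by positivity) ?_)
  calc arg z * gammaExp a b < openingAngle a b * gammaExp a b := by gcongr
    _ = Real.pi := by rw [mul_comm, gammaExp_mul_openingAngle hb]

lemma exists_mem_sectorS_cpow_gammaExp_eq (hb : 0 < b) {w : ℂ} (hw : 0 < w.im) :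
    ∃ z ∈ sectorS a b, z ^ (gammaExp a b : ℂ) = w := by
  have hγ : 0 < gammaExp a b := by linarith [one_lt_gammaExp (a := a) hb]
  have hw0 : w ≠ 0 := by rintro rfl; simp at hw
  have hpos := arg_pos_of_im_pos hw
  set θ := arg w / gammaExp a b
  have hθ0 : 0 < θ := div_pos hpos hγ
  have hθπ : θ < openingAngle a b := by
    rw [div_lt_iff₀ hγ, mul_comm, gammaExp_mul_openingAngle hb]
    exact arg_lt_pi_iff.mpr (Or.inr hw.ne')
  have hr : 0 < ‖w‖ ^ (gammaExp a b)⁻¹ := Real.rpow_pos_of_pos (norm_pos_iff.mpr hw0) _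
  have harg : arg (↑(‖w‖ ^ (gammaExp a b)⁻¹) * (cos θ + sin θ * I)) = θ :=
    arg_mul_cos_add_sin_mul_I hr
      ⟨by linarith [Real.pi_pos], by linarith [openingAngle_lt_pi (a := a) hb]⟩
  refine ⟨↑(‖w‖ ^ (gammaExp a b)⁻¹) * (cos θ + sin θ * I),
    by rw [mem_sectorS_iff hb, harg]; exact ⟨hθ0, hθπ⟩, ?_⟩
  rw [cpow_ofReal, harg, norm_mul, norm_cos_add_sin_mul_I, norm_real, Real.norm_of_nonneg hr.le,
    mul_one, Real.rpow_inv_rpow (norm_nonneg w) hγ.ne', div_mul_cancel₀ _ hγ.ne']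
  push_cast
  exact norm_mul_cos_add_sin_mul_I w

end Sector

/-- Without the factor `1 / π`, as in the Poisson formula of `Admissible`. -/
def halfPlanePoissonKernel (w : ℂ) (t : ℝ) : ℝ := w.im / (w.im ^ 2 + (t - w.re) ^ 2)

section PoissonKernel

variable {w : ℂ} {t : ℝ}

lemma halfPlanePoissonKernel_le_inv_im (hw : 0 < w.im) :
    halfPlanePoissonKernel w t ≤ (w.im)⁻¹ := by
  rw [halfPlanePoissonKernel, inv_eq_one_div, div_le_div_iff₀ (by positivity) hw]
  nlinarith [sq_nonneg (t - w.re)]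

lemma halfPlanePoissonKernel_le_of_two_mul_norm_le (hw : 0 < w.im) (ht : 2 * ‖w‖ ≤ |t|) :
    halfPlanePoissonKernel w t ≤ 2 / |t| := by
  have hV : w.im ≤ ‖w‖ := im_le_norm w
  have hD : |t| / 2 ≤ |t - w.re| := by
    linarith [abs_sub_abs_le_abs_sub t w.re, abs_re_le_norm w]
  have ht0 : 0 < |t| := by linarith
  rw [halfPlanePoissonKernel, div_le_div_iff₀ (by positivity) ht0, ← sq_abs (t - w.re)]
  nlinarith [mul_le_mul hD hD (by positivity) (abs_nonneg _)]

variable {γ L : ℝ}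

lemma lintegral_Ioc_halfPlanePoissonKernel_ray_le (hγ : 0 ≤ γ) (hw : 0 < w.im)
    (hL : 2 * (L ^ γ * ‖w‖) ≤ |t|) :
    ∫⁻ l in Ioc 0 L, ENNReal.ofReal (halfPlanePoissonKernel ((l ^ γ : ℝ) * w) t) ≤
      ENNReal.ofReal (2 / |t| * L) := by
  calc ∫⁻ l in Ioc 0 L, ENNReal.ofReal (halfPlanePoissonKernel ((l ^ γ : ℝ) * w) t)
      ≤ ∫⁻ _ in Ioc 0 L, ENNReal.ofReal (2 / |t|) := by
        refine setLIntegral_mono' measurableSet_Ioc fun l hl => ENNReal.ofReal_le_ofReal ?_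
        have hlγ : 0 < l ^ γ := Real.rpow_pos_of_pos hl.1 γ
        refine halfPlanePoissonKernel_le_of_two_mul_norm_le (by simpa using mul_pos hlγ hw) ?_
        rw [norm_mul, norm_real, Real.norm_of_nonneg hlγ.le]
        have := Real.rpow_le_rpow hl.1.le hl.2 hγ
        nlinarith [norm_nonneg w]
    _ = ENNReal.ofReal (2 / |t| * L) := by
        rw [setLIntegral_const, Real.volume_Ioc, sub_zero, ENNReal.ofReal_mul (by positivity)]

lemma lintegral_Ioi_halfPlanePoissonKernel_ray_le (hγ : 1 < γ) (hw : 0 < w.im) (hL : 0 < L) :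
    ∫⁻ l in Ioi L, ENNReal.ofReal (halfPlanePoissonKernel ((l ^ γ : ℝ) * w) t) ≤
      ENNReal.ofReal (L ^ (1 - γ) / (w.im * (γ - 1))) := by
  have hint : IntegrableOn (fun l : ℝ => (w.im)⁻¹ * l ^ (-γ)) (Ioi L) :=
    (integrableOn_Ioi_rpow_of_lt (by linarith) hL).const_mul _
  calc ∫⁻ l in Ioi L, ENNReal.ofReal (halfPlanePoissonKernel ((l ^ γ : ℝ) * w) t)
      ≤ ∫⁻ l in Ioi L, ENNReal.ofReal ((w.im)⁻¹ * l ^ (-γ)) := by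
        refine setLIntegral_mono' measurableSet_Ioi fun l hl => ENNReal.ofReal_le_ofReal ?_
        have hl0 : 0 < l := hL.trans hl
        have hlγ : 0 < l ^ γ := Real.rpow_pos_of_pos hl0 γ
        calc halfPlanePoissonKernel ((l ^ γ : ℝ) * w) t ≤ (l ^ γ * w.im)⁻¹ := by
              simpa using halfPlanePoissonKernel_le_inv_im (w := (l ^ γ : ℝ) * w) (t := t)
                (by simpa using mul_pos hlγ hw)
          _ = (w.im)⁻¹ * l ^ (-γ) := by rw [Real.rpow_neg hl0.le, mul_inv, mul_comm]
    _ = ENNReal.ofReal (L ^ (1 - γ) / (w.im * (γ - 1))) := by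
        rw [← ofReal_integral_eq_lintegral_ofReal hint
          ((ae_restrict_iff' measurableSet_Ioi).mpr (ae_of_all _ fun l hl => by
            have := Real.rpow_pos_of_pos (hL.trans hl) (-γ)
            positivity)),
          integral_const_mul, integral_Ioi_rpow_of_lt (by linarith) hL]
        congr 1
        have : γ - 1 ≠ 0 := by linarith
        rw [show -γ + 1 = 1 - γ by ring, show (1 : ℝ) - γ = -(γ - 1) by ring]
        field_simp

lemma exists_lintegral_halfPlanePoissonKernel_ray_le (hγ : 1 < γ) (hw : 0 < w.im) :
    ∃ K > 0, ∀ t : ℝ, t ≠ 0 →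
      ∫⁻ l in Ioi 0, ENNReal.ofReal (halfPlanePoissonKernel ((l ^ γ : ℝ) * w) t) ≤
        ENNReal.ofReal (K * |t| ^ (-1 + 1 / γ)) := by
  have hw0 : 0 < ‖w‖ := hw.trans_le (im_le_norm w)
  have hM : 0 < 2 * ‖w‖ := by positivity
  refine ⟨(2 + 2 * ‖w‖ / (w.im * (γ - 1))) / (2 * ‖w‖) ^ (1 / γ), ?_, fun t ht => ?_⟩
  · have : 0 < γ - 1 := by linarith
    positivity
  have ht0 : 0 < |t| := abs_pos.mpr ht
  set L := (|t| / (2 * ‖w‖)) ^ (1 / γ) with hLdef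
  have hL : 0 < L := by positivity
  have hLγ : L ^ γ = |t| / (2 * ‖w‖) := by
    rw [← Real.rpow_mul (by positivity), one_div_mul_cancel (by linarith), Real.rpow_one]
  have hfar : L ^ (1 - γ) / (w.im * (γ - 1)) = 2 * ‖w‖ / (w.im * (γ - 1)) / |t| * L := by
    rw [Real.rpow_sub hL, Real.rpow_one, hLγ]
    field_simp
  have hLt : L / |t| = |t| ^ (-1 + 1 / γ) / (2 * ‖w‖) ^ (1 / γ) := by
    rw [hLdef, Real.div_rpow ht0.le hM.le, Real.rpow_add ht0, Real.rpow_neg_one]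
    field_simp
  calc ∫⁻ l in Ioi 0, ENNReal.ofReal (halfPlanePoissonKernel ((l ^ γ : ℝ) * w) t)
      ≤ (∫⁻ l in Ioc 0 L, ENNReal.ofReal (halfPlanePoissonKernel ((l ^ γ : ℝ) * w) t)) +
          ∫⁻ l in Ioi L, ENNReal.ofReal (halfPlanePoissonKernel ((l ^ γ : ℝ) * w) t) := by
        rw [← Ioc_union_Ioi_eq_Ioi hL.le]
        exact lintegral_union_le _ _ _
    _ ≤ ENNReal.ofReal (2 / |t| * L) + ENNReal.ofReal (L ^ (1 - γ) / (w.im * (γ - 1))) := by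
        refine add_le_add
          (lintegral_Ioc_halfPlanePoissonKernel_ray_le (γ := γ) (by linarith) hw
            (le_of_eq (by rw [hLγ]; field_simp)))
          (lintegral_Ioi_halfPlanePoissonKernel_ray_le hγ hw hL)
    _ = ENNReal.ofReal ((2 + 2 * ‖w‖ / (w.im * (γ - 1))) / (2 * ‖w‖) ^ (1 / γ) *
          |t| ^ (-1 + 1 / γ)) := by
        have : 0 < γ - 1 := by linarith
        rw [← ENNReal.ofReal_add (by positivity) (by positivity), hfar]
        congr 1
        rw [show 2 / |t| * L + 2 * ‖w‖ / (w.im * (γ - 1)) / |t| * L =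
          (2 + 2 * ‖w‖ / (w.im * (γ - 1))) * (L / |t|) by ring, hLt]
        ring

end PoissonKernel

lemma measurable_halfPlanePoissonKernel_ray (γ : ℝ) (w : ℂ) :
    Measurable (Function.uncurry fun l t : ℝ => halfPlanePoissonKernel ((l ^ γ : ℝ) * w) t) := by
  simp only [halfPlanePoissonKernel, re_ofReal_mul, im_ofReal_mul]
  fun_prop

section Tonelli

variable {α β : Type*} [MeasurableSpace α] [MeasurableSpace β] {μ : Measure α} {ν : Measure β}

lemma ofReal_integral_le_lintegral_ofReal (f : α → ℝ) :
    ENNReal.ofReal (∫ x, f x ∂μ) ≤ ∫⁻ x, ENNReal.ofReal (f x) ∂μ := by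
  by_cases hf : Integrable f μ
  · rw [integral_eq_lintegral_pos_part_sub_lintegral_neg_part hf]
    exact (ENNReal.ofReal_le_ofReal (sub_le_self _ ENNReal.toReal_nonneg)).trans
      ENNReal.ofReal_toReal_le
  · simp [integral_undef hf]

lemma lintegral_ofReal_integral_mul_le [SFinite μ] [SFinite ν] {f g : β → ℝ} {k : α → β → ℝ}
    {K : ℝ} (hK : 0 ≤ K) (hf : Measurable f) (hf0 : ∀ y, 0 ≤ f y)
    (hk : Measurable (Function.uncurry k)) (hg0 : ∀ y, 0 ≤ g y)
    (hfg : Integrable (fun y => f y * g y) ν)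
    (hkg : ∀ᵐ y ∂ν, ∫⁻ x, ENNReal.ofReal (k x y) ∂μ ≤ ENNReal.ofReal (K * g y)) :
    ∫⁻ x, ENNReal.ofReal (∫ y, f y * k x y ∂ν) ∂μ ≤ ENNReal.ofReal (K * ∫ y, f y * g y ∂ν) := by
  calc ∫⁻ x, ENNReal.ofReal (∫ y, f y * k x y ∂ν) ∂μ
      ≤ ∫⁻ x, ∫⁻ y, ENNReal.ofReal (f y) * ENNReal.ofReal (k x y) ∂ν ∂μ := by
        refine lintegral_mono fun x => (ofReal_integral_le_lintegral_ofReal _).trans_eq ?_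
        simp only [ENNReal.ofReal_mul (hf0 _)]
    _ = ∫⁻ y, ENNReal.ofReal (f y) * ∫⁻ x, ENNReal.ofReal (k x y) ∂μ ∂ν := by
        rw [lintegral_lintegral_swap (by fun_prop)]
        simp only [lintegral_const_mul' _ _ ENNReal.ofReal_ne_top]
    _ ≤ ∫⁻ y, ENNReal.ofReal (K * (f y * g y)) ∂ν := by
        refine lintegral_mono_ae (hkg.mono fun y hy => ?_)
        rw [mul_left_comm, ENNReal.ofReal_mul (hf0 y)]
        gcongr
    _ = ENNReal.ofReal (K * ∫ y, f y * g y ∂ν) := by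
        rw [← integral_const_mul, ofReal_integral_eq_lintegral_ofReal (hfg.const_mul K)
          (ae_of_all _ fun y => by have := hf0 y; have := hg0 y; positivity)]

end Tonelli

lemma nonneg_of_pos_comp_cpow_gammaExp {a b : ℝ} (hb : 0 < b) {F : ℂ → ℝ}
    (hF : ContinuousOn F {z : ℂ | 0 ≤ z.im})
    (hpos : ∀ z ∈ sectorS a b, 0 < F (z ^ (gammaExp a b : ℂ))) {w : ℂ} (hw : 0 ≤ w.im) :
    0 ≤ F w := by
  have hcl : closure {z : ℂ | 0 < z.im} = {z : ℂ | 0 ≤ z.im} := closure_setOfPred_lt_im 0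
  refine le_on_closure (f := 0) (fun z hz => ?_) continuousOn_const (hcl ▸ hF) (hcl ▸ hw)
  obtain ⟨ζ, hζ, rfl⟩ := exists_mem_sectorS_cpow_gammaExp_eq (a := a) hb hz
  exact (hpos ζ hζ).le

/-- for a fixed point `ζ₀` in the open sector `S`, the integral
`∫₀^∞ H(l ζ₀) dl` is bounded by a constant depending only on `η`, `c` and `ζ₀`,
uniformly over all `c`-admissible positive harmonic functions `H` on `S'`. -/
theorem stmt5 (a b : ℝ) (hb : 0 < b) (c : ℝ) (hc : 0 < c)
    (ζ₀ : ℂ) (hζ₀ : ζ₀ ∈ sectorS a b) :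
    ∃ C : ℝ, 0 < C ∧
      ∀ H : ℂ → ℝ, PosHarmonic a b H → Admissible a b c H →
        (∫⁻ l in Set.Ici (0 : ℝ), ENNReal.ofReal (H ((l : ℂ) * ζ₀))) ≤ ENNReal.ofReal C := by
  set γ := gammaExp a b
  set w₀ := ζ₀ ^ (γ : ℂ)
  have hw₀ : 0 < w₀.im := im_cpow_gammaExp_pos hb hζ₀
  obtain ⟨K, hK, hkernel⟩ :=
    exists_lintegral_halfPlanePoissonKernel_ray_le (one_lt_gammaExp hb) hw₀
  refine ⟨Real.pi⁻¹ * (K * c), by positivity,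
    fun H hH ⟨Ht, hcont, hcomp, _, hint, hle, hpois⟩ => ?_⟩
  have hHt : ∀ t : ℝ, 0 ≤ Ht t := fun t => nonneg_of_pos_comp_cpow_gammaExp hb hcont
    (fun z hz => hcomp z hz ▸ hH.1 z (sectorS_subset_sectorS' hz)) (by simp)
  have hray : ∀ l ∈ Ioi (0 : ℝ), H (l * ζ₀) =
      Real.pi⁻¹ * ∫ t : ℝ, Ht t * halfPlanePoissonKernel ((l ^ γ : ℝ) * w₀) t := by
    intro l hl
    have hV : 0 < l ^ γ * w₀.im := mul_pos (Real.rpow_pos_of_pos hl γ) hw₀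
    rw [← hcomp _ (ofReal_mul_mem_sectorS hl hζ₀), ofReal_mul_cpow_ofReal hl,
      ← re_add_im ((l ^ γ : ℝ) * w₀), re_ofReal_mul, im_ofReal_mul, hpois _ _ hV, one_div]
    simp [halfPlanePoissonKernel]
  calc ∫⁻ l in Ici (0 : ℝ), ENNReal.ofReal (H (l * ζ₀))
      = ∫⁻ l in Ioi 0, ENNReal.ofReal Real.pi⁻¹ *
          ENNReal.ofReal (∫ t : ℝ, Ht t * halfPlanePoissonKernel ((l ^ γ : ℝ) * w₀) t) := by
        rw [← setLIntegral_congr Ioi_ae_eq_Ici]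
        refine setLIntegral_congr_fun measurableSet_Ioi fun l hl => ?_
        rw [hray l hl, ENNReal.ofReal_mul (by positivity)]
    _ ≤ ENNReal.ofReal Real.pi⁻¹ *
          ENNReal.ofReal (K * ∫ t : ℝ, Ht t * |t| ^ (-1 + 1 / γ)) := by
        rw [lintegral_const_mul' _ _ ENNReal.ofReal_ne_top]
        gcongr
        exact lintegral_ofReal_integral_mul_le hK.le
          ((hcont.comp_continuous continuous_ofReal fun t => by simp).measurable) hHt
          (measurable_halfPlanePoissonKernel_ray γ w₀) (fun t => by positivity) hint
          ((Measure.ae_ne volume 0).mono hkernel)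
    _ ≤ ENNReal.ofReal (Real.pi⁻¹ * (K * c)) := by
        rw [← ENNReal.ofReal_mul (by positivity)]
        gcongr
end
end

section
/- For all N, κ > 0 there is a constant c_{N,κ} > 0, depending only on η, N and κ, such that for every positive harmonic function H on S', every N-sparse subset Z of S (points counted with multiplicity) and every subset Z' of S such that Z is κ-dominated by Z', one has Σ_{ζ ∈ Z} H(ζ) ≤ c_{N,κ} Σ_{ζ' ∈ Z'} H(ζ') (the right-hand sum also counted with multiplicity). -/
/-!
Harnack's inequality, read off from the Poisson formula, says that a nonnegative harmonic function
on a closed disc of radius `R` changes by at most a factor `3` between the centre and any point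
at distance `≤ R / 2`. Every point of the convex sector `S` is the centre of a disc of a fixed
radius `δ` inside `S'`, so a chain of `⌈2κ / δ⌉` such steps along a segment gives `H ζ ≤ c H ζ'`
whenever `ζ, ζ' ∈ S` and `|ζ - ζ'| ≤ κ`. Bounding each `H ζ` in this way by a point of `Z'`
and swapping the order of summation, every point of `Z'` collects at most the `Z`-mass of its
closed `κ`-disc, which is at most `M N` when `M` unit discs cover a disc of radius `κ`.
-/

open MeasureTheory Filter Set
open scoped ENNReal Topology

noncomputable section

/-- A collection of points with multiplicities (encoded as a multiplicity function
`Z : α → ℕ`) is `N`-sparse if every open ball of radius `1` contains at most `N` of its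
points counted with multiplicity. -/
def NSparse {α : Type*} [PseudoMetricSpace α] (N : ℝ) (Z : α → ℕ) : Prop :=
  ∀ x : α,
    (∑' y : α, Set.indicator (Metric.ball x 1) (fun y => ((Z y : ℝ≥0∞))) y) ≤ ENNReal.ofReal N

/-- `Z` is `κ`-dominated by `Z'` (both with multiplicities): every point of `Z` lies at
distance at most `κ` from some point of `Z'`. -/
def DomBy {α : Type*} [PseudoMetricSpace α] (κ : ℝ) (Z Z' : α → ℕ) : Prop :=
  ∀ x, Z x ≠ 0 → ∃ y, Z' y ≠ 0 ∧ dist x y ≤ κ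

open Metric Complex InnerProductSpace

theorem InnerProductSpace.HarmonicOnNhd.harnack {f : ℂ → ℝ} {c w : ℂ} {R : ℝ}
    (hf : HarmonicOnNhd f (closedBall c R)) (hnonneg : ∀ z ∈ sphere c R, 0 ≤ f z)
    (hw : w ∈ ball c R) :
    (R - ‖w - c‖) / (R + ‖w - c‖) * f c ≤ f w := by
  have hR : |R| = R := abs_of_pos (pos_of_mem_ball hw)
  have hcont : ContinuousOn f (sphere c |R|) :=
    hf.contDiffOn.continuousOn.mono (by rw [hR]; exact sphere_subset_closedBall)
  calc (R - ‖w - c‖) / (R + ‖w - c‖) * f c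
      = Real.circleAverage (((R - ‖w - c‖) / (R + ‖w - c‖)) • f) c R := by
        rw [Real.circleAverage_smul, smul_eq_mul,
          (show HarmonicOnNhd f (closedBall c |R|) by rwa [hR]).circleAverage_eq]
    _ ≤ Real.circleAverage ((re ∘ herglotzRieszKernel c w) • f) c R := by
        apply Real.circleAverage_mono (hcont.const_smul _).circleIntegrable'
          ((continuous_re.comp_continuousOn (continuousOn_herglotzRieszKernel_sphere hw)).smul
            hcont).circleIntegrable'
        intro z hz
        rw [hR] at hz
        exact mul_le_mul_of_nonneg_right (le_re_herglotzRieszKernel hz hw) (hnonneg z hz)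
    _ = f w := hf.circleAverage_re_herglotzRieszKernel_smul hw

theorem InnerProductSpace.HarmonicOnNhd.le_three_mul {f : ℂ → ℝ} {c w : ℂ} {R : ℝ}
    (hf : HarmonicOnNhd f (closedBall c R)) (hnonneg : ∀ z ∈ closedBall c R, 0 ≤ f z)
    (hR : 0 < R) (hw : dist w c ≤ R / 2) : f c ≤ 3 * f w := by
  have hwc : ‖w - c‖ ≤ R / 2 := by rwa [← dist_eq_norm]
  have hk : 1 / 3 ≤ (R - ‖w - c‖) / (R + ‖w - c‖) := by
    rw [div_le_div_iff₀ (by norm_num) (by positivity)]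
    linarith
  have hfc := hnonneg c (mem_closedBall_self hR.le)
  calc f c = 3 * (1 / 3 * f c) := by ring
    _ ≤ 3 * ((R - ‖w - c‖) / (R + ‖w - c‖) * f c) := by gcongr
    _ ≤ 3 * f w := by
        gcongr
        exact hf.harnack (fun z hz ↦ hnonneg z (sphere_subset_closedBall hz))
          (mem_ball.2 (by linarith))

theorem InnerProductSpace.HarmonicOnNhd.le_three_pow_mul {f : ℂ → ℝ} {U s : Set ℂ}
    {δ : ℝ} (hf : HarmonicOnNhd f U) (hnonneg : ∀ z ∈ U, 0 ≤ f z) (hs : Convex ℝ s) (hδ : 0 < δ)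
    (hball : ∀ z ∈ s, closedBall z δ ⊆ U) (n : ℕ) {z w : ℂ} (hz : z ∈ s) (hw : w ∈ s)
    (hzw : dist z w ≤ n * (δ / 2)) : f z ≤ 3 ^ n * f w := by
  induction n generalizing z with
  | zero =>
    obtain rfl : z = w := dist_le_zero.1 (by simpa using hzw)
    simp
  | succ n ih =>
    push_cast at hzw
    have hn : (0 : ℝ) < n + 1 := by positivity
    set t : ℝ := 1 / (n + 1)
    have ht : t ∈ Set.Icc (0 : ℝ) 1 :=
      ⟨by positivity, (div_le_one hn).2 (le_add_of_nonneg_left n.cast_nonneg)⟩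
    set p := AffineMap.lineMap z w t
    have hpz : dist p z ≤ δ / 2 := by
      rw [dist_lineMap_left, Real.norm_of_nonneg ht.1]
      calc t * dist z w ≤ t * ((n + 1) * (δ / 2)) := by gcongr
        _ = δ / 2 := by simp only [t]; field_simp
    have hpw : dist p w ≤ n * (δ / 2) := by
      rw [dist_lineMap_right, Real.norm_of_nonneg (sub_nonneg.2 ht.2)]
      calc (1 - t) * dist z w ≤ (1 - t) * ((n + 1) * (δ / 2)) := by
            gcongr; exact sub_nonneg.2 ht.2
        _ = n * (δ / 2) := by simp only [t]; field_simp; ring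
    calc f z ≤ 3 * f p :=
          (hf.mono (hball z hz)).le_three_mul (fun x hx ↦ hnonneg x (hball z hz hx)) hδ hpz
      _ ≤ 3 * (3 ^ n * f w) := by gcongr; exact ih (hs.lineMap_mem hz hw ht) hpw
      _ = 3 ^ (n + 1) * f w := by ring

theorem HarmonicOnSet.harmonicOnNhd {f : ℂ → ℝ} {U : Set ℂ} (hU : IsOpen U)
    (hf : HarmonicOnSet f U) : HarmonicOnNhd f U := fun x hx ↦
  ⟨hf.1.contDiffAt (hU.mem_nhds hx), by
    filter_upwards [hU.mem_nhds hx] with y hy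
    rw [laplacian_eq_iteratedFDeriv_complexPlane]
    exact hf.2 y hy⟩

theorem isOpen_sectorS' (a b : ℝ) : IsOpen (sectorS' a b) :=
  (isOpen_lt continuous_const continuous_im).inter
    (isOpen_lt continuous_const
      ((continuous_const.mul continuous_re).add (continuous_const.mul continuous_im)))

theorem convex_sectorS (a b : ℝ) : Convex ℝ (sectorS a b) :=
  (convex_halfSpace_gt imLm.isLinear 0).inter
    (convex_halfSpace_gt ((b • reLm + a • imLm).isLinear) 0)

theorem closedBall_subset_sectorS' {a b : ℝ} {z : ℂ} (hz : z ∈ sectorS a b) :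
    closedBall z (Real.log 3 / (1 + |a| + |b|)) ⊆ sectorS' a b := by
  intro w hw
  set δ := Real.log 3 / (1 + |a| + |b|)
  have hlog : 0 < Real.log 3 := Real.log_pos (by norm_num)
  have hδ : (1 + |a| + |b|) * δ = Real.log 3 := by simp only [δ]; field_simp
  have hwz : ‖w - z‖ ≤ δ := by rwa [← dist_eq_norm]
  have hre : |w.re - z.re| ≤ δ := (abs_re_le_norm (w - z)).trans hwz
  have him : |w.im - z.im| ≤ δ := (abs_im_le_norm (w - z)).trans hwz
  have hbre : |b * (w.re - z.re)| ≤ |b| * δ := by rw [abs_mul]; gcongr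
  have haim : |a * (w.im - z.im)| ≤ |a| * δ := by rw [abs_mul]; gcongr
  obtain ⟨hz₁, hz₂⟩ := hz
  constructor
  · nlinarith [abs_le.1 him, abs_nonneg a, abs_nonneg b]
  · nlinarith [(abs_le.1 hbre).1, (abs_le.1 haim).1, abs_nonneg a, abs_nonneg b]

theorem PosHarmonic.exists_le_mul_of_dist_le (a b κ : ℝ) :
    ∃ C : ℝ, 0 < C ∧ ∀ H : ℂ → ℝ, PosHarmonic a b H →
      ∀ z ∈ sectorS a b, ∀ w ∈ sectorS a b, dist z w ≤ κ → H z ≤ C * H w := by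
  set δ := Real.log 3 / (1 + |a| + |b|)
  have hδ : 0 < δ := by have := Real.log_pos (show (1 : ℝ) < 3 by norm_num); positivity
  refine ⟨3 ^ ⌈κ / (δ / 2)⌉₊, by positivity, fun H hH z hz w hw hzw ↦ ?_⟩
  refine (hH.2.harmonicOnNhd (isOpen_sectorS' a b)).le_three_pow_mul
    (fun x hx ↦ (hH.1 x hx).le) (convex_sectorS a b) hδ (fun _ ↦ closedBall_subset_sectorS')
    _ hz hw ?_
  exact hzw.trans ((div_le_iff₀ (by positivity)).1 (Nat.le_ceil _))

theorem exists_tsum_indicator_closedBall_le {E : Type*} [NormedAddCommGroup E]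
    [ProperSpace E] {κ : ℝ} (hκ : 0 ≤ κ) :
    ∃ n : ℕ, 0 < n ∧ ∀ (N : ℝ) (Z : E → ℕ), NSparse N Z → ∀ w : E,
      ∑' x, (closedBall w κ).indicator (fun x ↦ (Z x : ℝ≥0∞)) x ≤ n * ENNReal.ofReal N := by
  obtain ⟨T, -, hT⟩ := (isCompact_closedBall (0 : E) κ).elim_nhds_subcover (ball · 1)
    (fun x _ ↦ ball_mem_nhds x one_pos)
  have hTpos : 0 < T.card := by
    obtain ⟨x, hx, -⟩ := mem_iUnion₂.1 (hT (mem_closedBall_self hκ))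
    exact Finset.card_pos.2 ⟨x, hx⟩
  refine ⟨T.card, hTpos, fun N Z hZ w ↦ ?_⟩
  have hcover : ∀ x, (closedBall w κ).indicator (fun x ↦ (Z x : ℝ≥0∞)) x ≤
      ∑ y ∈ T, (ball (w + y) 1).indicator (fun x ↦ (Z x : ℝ≥0∞)) x := by
    intro x
    by_cases hx : x ∈ closedBall w κ
    · obtain ⟨y, hy, hxy⟩ := mem_iUnion₂.1 (hT (by simpa [dist_eq_norm] using hx))
      have hxy' : x ∈ ball (w + y) 1 := by simpa [dist_eq_norm, sub_sub] using hxy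
      rw [indicator_of_mem hx, ← indicator_of_mem hxy' (fun x ↦ (Z x : ℝ≥0∞))]
      exact Finset.single_le_sum (f := fun y ↦ (ball (w + y) 1).indicator _ x)
        (fun _ _ ↦ zero_le) hy
    · simp [indicator_of_notMem hx]
  calc ∑' x, (closedBall w κ).indicator (fun x ↦ (Z x : ℝ≥0∞)) x
      ≤ ∑' x, ∑ y ∈ T, (ball (w + y) 1).indicator (fun x ↦ (Z x : ℝ≥0∞)) x :=
        ENNReal.tsum_le_tsum hcover
    _ = ∑ y ∈ T, ∑' x, (ball (w + y) 1).indicator (fun x ↦ (Z x : ℝ≥0∞)) x :=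
        Summable.tsum_finsetSum fun _ _ ↦ ENNReal.summable
    _ ≤ ∑ _y ∈ T, ENNReal.ofReal N := Finset.sum_le_sum fun y _ ↦ hZ (w + y)
    _ = T.card * ENNReal.ofReal N := by rw [Finset.sum_const, nsmul_eq_mul]

theorem DomBy.tsum_mul_le {α : Type*} [PseudoMetricSpace α] {κ : ℝ} {Z Z' : α → ℕ}
    (hdom : DomBy κ Z Z') {h : α → ℝ≥0∞} {c M : ℝ≥0∞}
    (hh : ∀ x y, Z x ≠ 0 → Z' y ≠ 0 → dist x y ≤ κ → h x ≤ c * h y)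
    (hM : ∀ y, ∑' x, (closedBall y κ).indicator (fun x ↦ (Z x : ℝ≥0∞)) x ≤ M) :
    ∑' x, Z x * h x ≤ c * M * ∑' y, Z' y * h y := by
  have hpt : ∀ x,
      Z x * h x ≤ c * ∑' y, Z x * (closedBall x κ).indicator (fun y ↦ Z' y * h y) y := by
    intro x
    rcases eq_or_ne (Z x) 0 with hx | hx
    · simp [hx]
    obtain ⟨y, hy, hxy⟩ := hdom x hx
    have hZ'y : (1 : ℝ≥0∞) ≤ Z' y := by exact_mod_cast Nat.one_le_iff_ne_zero.2 hy
    calc (Z x : ℝ≥0∞) * h x ≤ Z x * (c * (Z' y * h y)) := by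
          gcongr
          exact (hh x y hx hy hxy).trans (by gcongr; exact le_mul_of_one_le_left' hZ'y)
      _ = c * (Z x * (closedBall x κ).indicator (fun y ↦ Z' y * h y) y) := by
          rw [indicator_of_mem (mem_closedBall.2 (by rwa [dist_comm]))]; ring
      _ ≤ c * ∑' y, Z x * (closedBall x κ).indicator (fun y ↦ Z' y * h y) y := by
          gcongr; exact ENNReal.le_tsum y
  have hswap : ∀ x y, (Z x : ℝ≥0∞) * (closedBall x κ).indicator (fun y ↦ Z' y * h y) y =
      Z' y * h y * (closedBall y κ).indicator (fun x ↦ (Z x : ℝ≥0∞)) x := by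
    intro x y
    by_cases hxy : dist x y ≤ κ
    · rw [indicator_of_mem (mem_closedBall.2 (by rwa [dist_comm])),
        indicator_of_mem (mem_closedBall.2 hxy)]; ring
    · rw [indicator_of_notMem (by rwa [mem_closedBall, dist_comm]),
        indicator_of_notMem (by rwa [mem_closedBall])]; simp
  calc ∑' x, Z x * h x
      ≤ ∑' x, c * ∑' y, Z x * (closedBall x κ).indicator (fun y ↦ Z' y * h y) y :=
        ENNReal.tsum_le_tsum hpt
    _ = c * ∑' y, Z' y * h y *
          ∑' x, (closedBall y κ).indicator (fun x ↦ (Z x : ℝ≥0∞)) x := by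
        rw [ENNReal.tsum_mul_left, ENNReal.tsum_comm]
        congr 1
        refine tsum_congr fun y ↦ ?_
        rw [← ENNReal.tsum_mul_left]
        exact tsum_congr fun x ↦ hswap x y
    _ ≤ c * ∑' y, Z' y * h y * M := by gcongr with y; exact hM y
    _ = c * M * ∑' y, Z' y * h y := by rw [ENNReal.tsum_mul_right]; ring

theorem stmt6_general (a b : ℝ) (N κ : ℝ) (hN : 0 < N) (hκ : 0 < κ) :
    ∃ C : ℝ, 0 < C ∧
      ∀ H : ℂ → ℝ, PosHarmonic a b H →
        ∀ Z Z' : ℂ → ℕ,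
          (∀ ζ, Z ζ ≠ 0 → ζ ∈ sectorS a b) → (∀ ζ, Z' ζ ≠ 0 → ζ ∈ sectorS a b) →
          NSparse N Z → DomBy κ Z Z' →
          (∑' ζ : ℂ, (Z ζ : ℝ≥0∞) * ENNReal.ofReal (H ζ)) ≤
            ENNReal.ofReal C * ∑' ζ : ℂ, (Z' ζ : ℝ≥0∞) * ENNReal.ofReal (H ζ) := by
  obtain ⟨c, hc, hHarnack⟩ := PosHarmonic.exists_le_mul_of_dist_le a b κ
  obtain ⟨n, hn, hcount⟩ := exists_tsum_indicator_closedBall_le (E := ℂ) hκ.le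
  refine ⟨c * (n * N), by positivity, fun H hH Z Z' hZ hZ' hsparse hdom ↦ ?_⟩
  rw [ENNReal.ofReal_mul hc.le, ENNReal.ofReal_mul (by positivity), ENNReal.ofReal_natCast]
  refine hdom.tsum_mul_le (fun x y hx hy hxy ↦ ?_) (hcount N Z hsparse)
  rw [← ENNReal.ofReal_mul hc.le]
  exact ENNReal.ofReal_le_ofReal (hHarnack H hH x (hZ x hx) y (hZ' y hy) hxy)

/-- comparison of sums of a positive harmonic function over an `N`-sparse
family `Z` in `S` dominated by another family `Z'` in `S`. -/
theorem stmt6 (a b : ℝ) (hb : 0 < b) (N κ : ℝ) (hN : 0 < N) (hκ : 0 < κ) :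
    ∃ C : ℝ, 0 < C ∧
      ∀ H : ℂ → ℝ, PosHarmonic a b H →
        ∀ Z Z' : ℂ → ℕ,
          (∀ ζ, Z ζ ≠ 0 → ζ ∈ sectorS a b) → (∀ ζ, Z' ζ ≠ 0 → ζ ∈ sectorS a b) →
          NSparse N Z → DomBy κ Z Z' →
          (∑' ζ : ℂ, (Z ζ : ℝ≥0∞) * ENNReal.ofReal (H ζ)) ≤
            ENNReal.ofReal C * ∑' ζ : ℂ, (Z' ζ : ℝ≥0∞) * ENNReal.ofReal (H ζ) :=
  stmt6_general a b N κ hN hκ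
end
end

section
/- (1) For every compact subset K of ℂ⁴ there is a constant C_K > 0 such that for all λ ∈ ℂ with |λ| ≥ 1 and all admissible ζ = (ζ₁, ζ₂) with |ζ₁| ≤ |λ|^{-1}, the 4-dimensional area (with multiplicity) of a_λ(Γ_ζ) ∩ K, that is, the integral over {(z₁, w₁) ∈ 𝔻² : Ψ_{λ,ζ}(z₁, w₁) ∈ K} of the 4-dimensional area Jacobian of the parametrization Ψ_{λ,ζ}(z₁, w₁) := (λ z₁, λ f_ζ(z₁, w₁), w₁, φ_{ζ₂}(w₁)), is at most C_K. (2) There exists a ball W centered at the origin of ℂ⁴, depending only on κ₀, such that a_λ(Γ_ζ) ∩ W = ∅ for every pair (λ, ζ) with |λ| ≥ 1 and |ζ₁| > |λ|^{-1}. -/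
/-!
Each `φ α` is a holomorphic self-map of `3𝔻`, so by the Cauchy estimates `‖(φ α)'‖ ≤ 12` on the
disc of radius `5/2`, where `φ α` is therefore `12`-Lipschitz.

(1) The parameters `(z₁, w₁)` mapped into `K ⊆ closedBall 0 R` satisfy `‖λ z₁‖ ≤ R`, so they lie
in a polydisc of volume `π² R² / ‖λ‖²`. There `‖f_ζ(z₁, ·)‖ ≤ κ₀ ‖ζ₁‖ + 12 ‖z₁‖ = O(‖λ‖⁻¹)` on a
disc of radius `1/2`, so a Cauchy estimate gives `‖λ ∂_w f_ζ‖ = O(1)`, while the other partial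
derivatives are `O(1)`; hence the area Jacobian is `O(‖λ‖²)` and the area is bounded.

(2) The lower Lipschitz bound gives `κ₀⁻¹ ‖ζ₁‖ ≤ ‖f_ζ(z₁, w₁)‖ + 12 ‖z₁‖`, hence
`‖λ ζ₁‖ ≤ 13 κ₀ ‖Ψ(z₁, w₁)‖`; since `‖λ ζ₁‖ > 1`, the image avoids the ball of radius
`1 / (13 κ₀)`.
-/

open MeasureTheory Metric Set Filter
open scoped ENNReal Topology

noncomputable section

/-- The parametrization `Ψ_{λ,ζ}(z₁, w₁) = (λz₁, λf_ζ(z₁,w₁), w₁, φ_{ζ₂}(w₁))` of the dilated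
graph `a_λ(Γ_ζ)`, where `f_ζ(z₁,w₁) = φ_{ζ₁+ζ₂}(z₁+w₁) - φ_{ζ₂}(w₁)`. -/
def Psi (φ : ℂ → ℂ → ℂ) (lam ζ₁ ζ₂ z₁ w₁ : ℂ) : ℂ × ℂ × ℂ × ℂ :=
  (lam * z₁, lam * (φ (ζ₁ + ζ₂) (z₁ + w₁) - φ ζ₂ w₁), w₁, φ ζ₂ w₁)

/-- The 4-dimensional area Jacobian of the holomorphic parametrization `Ψ_{λ,ζ}`: by
Wirtinger's theorem it is the sum of the squared absolute values of the `2 × 2` minors of the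
complex Jacobian matrix of `Ψ_{λ,ζ}` (rows `(λ, 0)`, `(λ∂_z f, λ∂_w f)`, `(0,1)`, `(0, φ')`). -/
def areaJac (φ : ℂ → ℂ → ℂ) (lam ζ₁ ζ₂ z₁ w₁ : ℂ) : ℝ :=
  let fz := deriv (fun z => φ (ζ₁ + ζ₂) (z + w₁) - φ ζ₂ w₁) z₁
  let fw := deriv (fun w => φ (ζ₁ + ζ₂) (z₁ + w) - φ ζ₂ w) w₁
  let dφ := deriv (φ ζ₂) w₁
  ‖lam ^ 2 * fw‖ ^ 2 + ‖lam‖ ^ 2 + ‖lam * dφ‖ ^ 2 +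
    ‖lam * fz‖ ^ 2 + ‖lam * (fz * dφ)‖ ^ 2

lemma norm_deriv_le_of_forall_norm_le {E : Type*} [NormedAddCommGroup E] [NormedSpace ℂ E]
    {f : ℂ → E} {c : ℂ} {r M : ℝ} (hd : DifferentiableOn ℂ f (ball c r))
    (hM : ∀ z ∈ ball c r, ‖f z‖ ≤ M) (hr : 0 < r) :
    ‖deriv f c‖ ≤ 2 * M / r := by
  refine Complex.norm_deriv_le_div_of_mapsTo_ball hd (fun z hz => ?_) hr
  rw [mem_closedBall, dist_eq_norm]
  linarith [norm_sub_le (f z) (f c), hM z hz, hM c (mem_ball_self hr)]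

lemma volume_closedBall_prod_closedBall (a b : ℂ) {r s : ℝ} (hr : 0 ≤ r) (hs : 0 ≤ s) :
    volume (closedBall a r ×ˢ closedBall b s) = ENNReal.ofReal ((Real.pi * r * s) ^ 2) := by
  rw [Measure.volume_eq_prod, Measure.prod_prod, Complex.volume_closedBall,
    Complex.volume_closedBall, ← ENNReal.ofReal_coe_nnreal, NNReal.coe_real_pi,
    ← ENNReal.ofReal_pow hr, ← ENNReal.ofReal_pow hs, ← ENNReal.ofReal_mul (by positivity),
    ← ENNReal.ofReal_mul (by positivity), ← ENNReal.ofReal_mul (by positivity)]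
  ring_nf

lemma norm_sq_minors_eq (lam a b c : ℂ) :
    ‖lam ^ 2 * c‖ ^ 2 + ‖lam‖ ^ 2 + ‖lam * b‖ ^ 2 + ‖lam * a‖ ^ 2 + ‖lam * (a * b)‖ ^ 2 =
      (‖lam * c‖ ^ 2 + (1 + ‖a‖ ^ 2) * (1 + ‖b‖ ^ 2)) * ‖lam‖ ^ 2 := by
  simp only [norm_mul, norm_pow]
  ring

def HolSelfMapFamily (φ : ℂ → ℂ → ℂ) : Prop :=
  ∀ α ∈ ball (0 : ℂ) 3, DifferentiableOn ℂ (φ α) (ball 0 3) ∧ MapsTo (φ α) (ball 0 3) (ball 0 3)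

namespace HolSelfMapFamily

variable {φ : ℂ → ℂ → ℂ} {κ₀ : ℝ} {α : ℂ}

lemma differentiableAt (hφ : HolSelfMapFamily φ) (hα : α ∈ ball (0 : ℂ) 3) {t : ℂ}
    (ht : t ∈ ball (0 : ℂ) 3) : DifferentiableAt ℂ (φ α) t :=
  (hφ α hα).1.differentiableAt (isOpen_ball.mem_nhds ht)

lemma norm_deriv_le (hφ : HolSelfMapFamily φ) (hα : α ∈ ball (0 : ℂ) 3) {x : ℂ}
    (hx : x ∈ ball (0 : ℂ) (5 / 2)) : ‖deriv (φ α) x‖ ≤ 12 := by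
  have hsub : ball x (1 / 2) ⊆ ball (0 : ℂ) 3 := by
    refine ball_subset_ball' ?_
    rw [dist_zero_right]
    linarith [mem_ball_zero_iff.1 hx]
  have h := norm_deriv_le_of_forall_norm_le (M := 3) ((hφ α hα).1.mono hsub)
    (fun z hz => (mem_ball_zero_iff.1 ((hφ α hα).2 (hsub hz))).le) (by norm_num)
  linarith

lemma norm_sub_le (hφ : HolSelfMapFamily φ) (hα : α ∈ ball (0 : ℂ) 3) {x y : ℂ}
    (hx : x ∈ ball (0 : ℂ) (5 / 2)) (hy : y ∈ ball (0 : ℂ) (5 / 2)) :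
    ‖φ α x - φ α y‖ ≤ 12 * ‖x - y‖ :=
  (convex_ball _ _).norm_image_sub_le_of_norm_deriv_le
    (fun _ hz => hφ.differentiableAt hα (ball_subset_ball (by norm_num) hz))
    (fun _ hz => hφ.norm_deriv_le hα hz) hy hx

lemma norm_deriv_sub_le (hφ : HolSelfMapFamily φ)
    (hlip : ∀ t ∈ ball (0 : ℂ) 3, ∀ α ∈ ball (0 : ℂ) 3, ∀ β ∈ ball (0 : ℂ) 3,
      ‖φ α t - φ β t‖ ≤ κ₀ * ‖α - β‖)
    {α β z₁ w₁ : ℂ} (hα : α ∈ ball (0 : ℂ) 3) (hβ : β ∈ ball (0 : ℂ) 3)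
    (hz₁ : z₁ ∈ ball (0 : ℂ) 1) (hw₁ : w₁ ∈ ball (0 : ℂ) 1) :
    ‖deriv (fun w => φ α (z₁ + w) - φ β w) w₁‖ ≤ 4 * (κ₀ * ‖α - β‖ + 12 * ‖z₁‖) := by
  have hmem : ∀ w ∈ ball w₁ (1 / 2), z₁ + w ∈ ball (0 : ℂ) (5 / 2) ∧ w ∈ ball (0 : ℂ) (5 / 2) := by
    intro w hw
    simp only [mem_ball_zero_iff] at hz₁ hw₁ ⊢
    rw [mem_ball_iff_norm] at hw
    have : ‖w‖ < 3 / 2 := by linarith [norm_le_insert' w w₁]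
    exact ⟨by linarith [norm_add_le z₁ w], by linarith⟩
  have h3 : ball (0 : ℂ) (5 / 2) ⊆ ball 0 3 := ball_subset_ball (by norm_num)
  have hdiff : DifferentiableOn ℂ (fun w => φ α (z₁ + w) - φ β w) (ball w₁ (1 / 2)) :=
    fun w hw => ((hφ.differentiableAt hα (h3 (hmem w hw).1)).comp w
      (differentiableAt_id.const_add z₁)).sub
      (hφ.differentiableAt hβ (h3 (hmem w hw).2)) |>.differentiableWithinAt
  have hbound : ∀ w ∈ ball w₁ (1 / 2), ‖φ α (z₁ + w) - φ β w‖ ≤ κ₀ * ‖α - β‖ + 12 * ‖z₁‖ := by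
    intro w hw
    obtain ⟨hzw, hw'⟩ := hmem w hw
    calc ‖φ α (z₁ + w) - φ β w‖
        ≤ ‖φ α (z₁ + w) - φ β (z₁ + w)‖ + ‖φ β (z₁ + w) - φ β w‖ :=
          norm_sub_le_norm_sub_add_norm_sub _ _ _
      _ ≤ κ₀ * ‖α - β‖ + 12 * ‖z₁ + w - w‖ :=
          add_le_add (hlip _ (h3 hzw) α hα β hβ) (hφ.norm_sub_le hβ hzw hw')
      _ = κ₀ * ‖α - β‖ + 12 * ‖z₁‖ := by rw [add_sub_cancel_right]
  have h := norm_deriv_le_of_forall_norm_le hdiff hbound (by norm_num)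
  linarith

lemma norm_mul_le_mul_norm_Psi (hφ : HolSelfMapFamily φ) (hκ₀ : 0 < κ₀)
    (hlip : ∀ t ∈ ball (0 : ℂ) 3, ∀ α ∈ ball (0 : ℂ) 3, ∀ β ∈ ball (0 : ℂ) 3,
      κ₀⁻¹ * ‖α - β‖ ≤ ‖φ α t - φ β t‖)
    {lam ζ₁ ζ₂ z₁ w₁ : ℂ} (hζ₂ : ζ₂ ∈ ball (0 : ℂ) 3) (hζ : ζ₁ + ζ₂ ∈ ball (0 : ℂ) 3)
    (hz₁ : z₁ ∈ ball (0 : ℂ) 1) (hw₁ : w₁ ∈ ball (0 : ℂ) 1) :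
    ‖lam * ζ₁‖ ≤ 13 * κ₀ * ‖Psi φ lam ζ₁ ζ₂ z₁ w₁‖ := by
  have hzΨ : ‖lam * z₁‖ ≤ ‖Psi φ lam ζ₁ ζ₂ z₁ w₁‖ := norm_fst_le (Psi φ lam ζ₁ ζ₂ z₁ w₁)
  have hfΨ : ‖lam * (φ (ζ₁ + ζ₂) (z₁ + w₁) - φ ζ₂ w₁)‖ ≤ ‖Psi φ lam ζ₁ ζ₂ z₁ w₁‖ :=
    (norm_fst_le (Psi φ lam ζ₁ ζ₂ z₁ w₁).2).trans (norm_snd_le (Psi φ lam ζ₁ ζ₂ z₁ w₁))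
  rw [mem_ball_zero_iff] at hz₁ hw₁
  have hlow := hlip w₁ (mem_ball_zero_iff.2 (by linarith)) _ hζ _ hζ₂
  rw [add_sub_cancel_right, inv_mul_le_iff₀ hκ₀] at hlow
  have hshift := hφ.norm_sub_le hζ (x := z₁ + w₁) (y := w₁)
    (mem_ball_zero_iff.2 (by linarith [norm_add_le z₁ w₁])) (mem_ball_zero_iff.2 (by linarith))
  rw [add_sub_cancel_right] at hshift
  have hsplit : φ (ζ₁ + ζ₂) w₁ - φ ζ₂ w₁ = (φ (ζ₁ + ζ₂) (z₁ + w₁) - φ ζ₂ w₁) -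
      (φ (ζ₁ + ζ₂) (z₁ + w₁) - φ (ζ₁ + ζ₂) w₁) := by ring
  have hζ₁ : ‖ζ₁‖ ≤ κ₀ * (‖φ (ζ₁ + ζ₂) (z₁ + w₁) - φ ζ₂ w₁‖ + 12 * ‖z₁‖) := by
    rw [hsplit] at hlow
    exact hlow.trans (mul_le_mul_of_nonneg_left
      ((_root_.norm_sub_le _ _).trans (add_le_add_right hshift _)) hκ₀.le)
  rw [norm_mul] at hzΨ hfΨ ⊢
  nlinarith [norm_nonneg lam]

lemma areaJac_le (hφ : HolSelfMapFamily φ)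
    (hlip : ∀ t ∈ ball (0 : ℂ) 3, ∀ α ∈ ball (0 : ℂ) 3, ∀ β ∈ ball (0 : ℂ) 3,
      ‖φ α t - φ β t‖ ≤ κ₀ * ‖α - β‖)
    {lam ζ₁ ζ₂ z₁ w₁ : ℂ} (hζ₂ : ζ₂ ∈ ball (0 : ℂ) 3) (hζ : ζ₁ + ζ₂ ∈ ball (0 : ℂ) 3)
    (hz₁ : z₁ ∈ ball (0 : ℂ) 1) (hw₁ : w₁ ∈ ball (0 : ℂ) 1) :
    areaJac φ lam ζ₁ ζ₂ z₁ w₁ ≤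
      ((4 * (κ₀ * ‖lam * ζ₁‖ + 12 * ‖lam * z₁‖)) ^ 2 + 145 ^ 2) * ‖lam‖ ^ 2 := by
  have hw₁' : w₁ ∈ ball (0 : ℂ) (5 / 2) := ball_subset_ball (by norm_num) hw₁
  have hzw : z₁ + w₁ ∈ ball (0 : ℂ) (5 / 2) := by
    rw [mem_ball_zero_iff] at hz₁ hw₁ ⊢
    linarith [norm_add_le z₁ w₁]
  have hfz : ‖deriv (fun z => φ (ζ₁ + ζ₂) (z + w₁) - φ ζ₂ w₁) z₁‖ ≤ 12 := by
    rw [deriv_sub_const, deriv_comp_add_const]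
    exact hφ.norm_deriv_le hζ hzw
  have hdφ : ‖deriv (φ ζ₂) w₁‖ ≤ 12 := hφ.norm_deriv_le hζ₂ hw₁'
  have hfw : ‖lam * deriv (fun w => φ (ζ₁ + ζ₂) (z₁ + w) - φ ζ₂ w) w₁‖ ≤
      4 * (κ₀ * ‖lam * ζ₁‖ + 12 * ‖lam * z₁‖) := by
    have h := hφ.norm_deriv_sub_le hlip hζ hζ₂ hz₁ hw₁
    rw [add_sub_cancel_right] at h
    rw [norm_mul, norm_mul, norm_mul]
    nlinarith [norm_nonneg lam]
  simp only [areaJac]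
  rw [norm_sq_minors_eq]
  gcongr
  calc (1 + ‖_‖ ^ 2) * (1 + ‖_‖ ^ 2) ≤ (1 + 12 ^ 2) * (1 + 12 ^ 2) := by gcongr
    _ = 145 ^ 2 := by norm_num

lemma lintegral_areaJac_le (hφ : HolSelfMapFamily φ) (hκ₀ : 0 ≤ κ₀)
    (hlip : ∀ t ∈ ball (0 : ℂ) 3, ∀ α ∈ ball (0 : ℂ) 3, ∀ β ∈ ball (0 : ℂ) 3,
      ‖φ α t - φ β t‖ ≤ κ₀ * ‖α - β‖)
    {lam ζ₁ ζ₂ : ℂ} (hlam : lam ≠ 0) (hζ₂ : ζ₂ ∈ ball (0 : ℂ) 3)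
    (hζ : ζ₁ + ζ₂ ∈ ball (0 : ℂ) 3) (hζ₁ : ‖lam * ζ₁‖ ≤ 1) {R : ℝ} (hR : 0 ≤ R) :
    ∫⁻ p in {p : ℂ × ℂ | ‖p.1‖ < 1 ∧ ‖p.2‖ < 1 ∧ ‖lam * p.1‖ ≤ R},
        ENNReal.ofReal (areaJac φ lam ζ₁ ζ₂ p.1 p.2) ≤
      ENNReal.ofReal (((4 * (κ₀ + 12 * R)) ^ 2 + 145 ^ 2) * (Real.pi * R) ^ 2) := by
  set C := (4 * (κ₀ + 12 * R)) ^ 2 + 145 ^ 2 with hC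
  set S := {p : ℂ × ℂ | ‖p.1‖ < 1 ∧ ‖p.2‖ < 1 ∧ ‖lam * p.1‖ ≤ R}
  have hlam₀ : 0 < ‖lam‖ := norm_pos_iff.2 hlam
  have hbound : ∀ p ∈ S, ENNReal.ofReal (areaJac φ lam ζ₁ ζ₂ p.1 p.2) ≤
      ENNReal.ofReal (C * ‖lam‖ ^ 2) := by
    rintro ⟨z₁, w₁⟩ ⟨hz₁, hw₁, hzR⟩
    refine ENNReal.ofReal_le_ofReal ((hφ.areaJac_le hlip hζ₂ hζ (mem_ball_zero_iff.2 hz₁)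
      (mem_ball_zero_iff.2 hw₁)).trans ?_)
    have : κ₀ * ‖lam * ζ₁‖ + 12 * ‖lam * z₁‖ ≤ κ₀ + 12 * R := by nlinarith
    rw [hC]
    gcongr
  have hS : S ⊆ closedBall (0 : ℂ) (R / ‖lam‖) ×ˢ closedBall (0 : ℂ) 1 := by
    rintro ⟨z₁, w₁⟩ ⟨-, hw₁, hzR⟩
    rw [norm_mul] at hzR
    refine ⟨?_, mem_closedBall_zero_iff.2 hw₁.le⟩
    rw [mem_closedBall_zero_iff, le_div_iff₀ hlam₀]
    linarith
  calc ∫⁻ p in S, ENNReal.ofReal (areaJac φ lam ζ₁ ζ₂ p.1 p.2)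
      ≤ ∫⁻ _ in S, ENNReal.ofReal (C * ‖lam‖ ^ 2) := setLIntegral_mono measurable_const hbound
    _ = ENNReal.ofReal (C * ‖lam‖ ^ 2) * volume S := setLIntegral_const _ _
    _ ≤ ENNReal.ofReal (C * ‖lam‖ ^ 2) *
          volume (closedBall (0 : ℂ) (R / ‖lam‖) ×ˢ closedBall (0 : ℂ) 1) := by
        gcongr
    _ = ENNReal.ofReal (C * (Real.pi * R) ^ 2) := by
        rw [volume_closedBall_prod_closedBall _ _ (by positivity) zero_le_one,
          ← ENNReal.ofReal_mul (by positivity)]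
        congr 1
        field_simp

end HolSelfMapFamily

theorem stmt17_general (κ₀ : ℝ) (hκ₀ : 1 ≤ κ₀) (φ : ℂ → ℂ → ℂ)
    (hhol : ∀ α ∈ Metric.ball (0 : ℂ) 3, DifferentiableOn ℂ (φ α) (Metric.ball (0 : ℂ) 3))
    (hmaps : ∀ α ∈ Metric.ball (0 : ℂ) 3, ∀ t ∈ Metric.ball (0 : ℂ) 3,
      φ α t ∈ Metric.ball (0 : ℂ) 3)
    (hlip : ∀ t ∈ Metric.ball (0 : ℂ) 3, ∀ α ∈ Metric.ball (0 : ℂ) 3,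
      ∀ β ∈ Metric.ball (0 : ℂ) 3,
      κ₀⁻¹ * ‖α - β‖ ≤ ‖φ α t - φ β t‖ ∧
        ‖φ α t - φ β t‖ ≤ κ₀ * ‖α - β‖) :
    -- (1) bounded area on compact sets, uniformly for |ζ₁| ≤ |λ|⁻¹
    (∀ K : Set (ℂ × ℂ × ℂ × ℂ), IsCompact K →
      ∃ C : ℝ, 0 < C ∧
        ∀ lam : ℂ, 1 ≤ ‖lam‖ →
          ∀ ζ₁ ζ₂ : ℂ, ζ₂ ∈ Metric.ball (0 : ℂ) 3 → ζ₁ + ζ₂ ∈ Metric.ball (0 : ℂ) 3 →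
            ‖ζ₁‖ ≤ (‖lam‖)⁻¹ →
            (∫⁻ p in {p : ℂ × ℂ | ‖p.1‖ < 1 ∧ ‖p.2‖ < 1 ∧
                Psi φ lam ζ₁ ζ₂ p.1 p.2 ∈ K},
              ENNReal.ofReal (areaJac φ lam ζ₁ ζ₂ p.1 p.2)) ≤ ENNReal.ofReal C) ∧
    -- (2) a ball W around the origin avoided when |ζ₁| > |λ|⁻¹
    (∃ r : ℝ, 0 < r ∧
      ∀ lam : ℂ, 1 ≤ ‖lam‖ →
        ∀ ζ₁ ζ₂ : ℂ, ζ₂ ∈ Metric.ball (0 : ℂ) 3 → ζ₁ + ζ₂ ∈ Metric.ball (0 : ℂ) 3 →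
          (‖lam‖)⁻¹ < ‖ζ₁‖ →
          ∀ z₁ ∈ Metric.ball (0 : ℂ) 1, ∀ w₁ ∈ Metric.ball (0 : ℂ) 1,
            Psi φ lam ζ₁ ζ₂ z₁ w₁ ∉ Metric.ball (0 : ℂ × ℂ × ℂ × ℂ) r) := by
  have hφ : HolSelfMapFamily φ := fun α hα => ⟨hhol α hα, hmaps α hα⟩
  have hκ₀' : 0 < κ₀ := one_pos.trans_le hκ₀
  refine ⟨fun K hK => ?_, ⟨(13 * κ₀)⁻¹, by positivity, ?_⟩⟩
  · obtain ⟨R, hR, hKR⟩ := hK.isBounded.subset_closedBall_lt 0 0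
    refine ⟨((4 * (κ₀ + 12 * R)) ^ 2 + 145 ^ 2) * (Real.pi * R) ^ 2, by positivity,
      fun lam hlam ζ₁ ζ₂ hζ₂ hζ hζ₁ => ?_⟩
    have hlam₀ : 0 < ‖lam‖ := one_pos.trans_le hlam
    refine le_trans (lintegral_mono_set ?_)
      (hφ.lintegral_areaJac_le hκ₀'.le (fun t ht α hα β hβ => (hlip t ht α hα β hβ).2)
        (norm_pos_iff.1 hlam₀) hζ₂ hζ ?_ hR.le)
    · rintro p ⟨hp₁, hp₂, hpK⟩
      exact ⟨hp₁, hp₂, (norm_fst_le _).trans (mem_closedBall_zero_iff.1 (hKR hpK))⟩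
    · rw [norm_mul, ← mul_inv_cancel₀ hlam₀.ne']
      gcongr
  · intro lam hlam ζ₁ ζ₂ hζ₂ hζ hζ₁ z₁ hz₁ w₁ hw₁ hΨ
    have hbig : 1 < ‖lam * ζ₁‖ := by
      rw [norm_mul]
      exact (inv_lt_iff_one_lt_mul₀' (one_pos.trans_le hlam)).1 hζ₁
    have hsmall : 13 * κ₀ * ‖Psi φ lam ζ₁ ζ₂ z₁ w₁‖ < 1 := by
      calc 13 * κ₀ * ‖Psi φ lam ζ₁ ζ₂ z₁ w₁‖ < 13 * κ₀ * (13 * κ₀)⁻¹ := by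
            gcongr
            exact mem_ball_zero_iff.1 hΨ
        _ = 1 := mul_inv_cancel₀ (by positivity)
    exact (hbig.trans_le (hφ.norm_mul_le_mul_norm_Psi hκ₀'
      (fun t ht α hα β hβ => (hlip t ht α hα β hβ).1) hζ₂ hζ hz₁ hw₁)).not_gt hsmall

/-- (1) the 4-dimensional area (with multiplicity) of `a_λ(Γ_ζ)` in any compact
set `K ⊂ ℂ⁴` is bounded uniformly in `(λ, ζ)` with `|λ| ≥ 1` and `|ζ₁| ≤ |λ|⁻¹`;
(2) there is a ball `W` centered at `0 ∈ ℂ⁴` avoided by `a_λ(Γ_ζ)` whenever `|ζ₁| > |λ|⁻¹`. -/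
theorem stmt17 (κ₀ : ℝ) (hκ₀ : 1 ≤ κ₀) (φ : ℂ → ℂ → ℂ)
    (hhol : ∀ α ∈ Metric.ball (0 : ℂ) 3, DifferentiableOn ℂ (φ α) (Metric.ball (0 : ℂ) 3))
    (hmaps : ∀ α ∈ Metric.ball (0 : ℂ) 3, ∀ t ∈ Metric.ball (0 : ℂ) 3,
      φ α t ∈ Metric.ball (0 : ℂ) 3)
    (hzero : ∀ α ∈ Metric.ball (0 : ℂ) 3, φ α 0 = α)
    (hlip : ∀ t ∈ Metric.ball (0 : ℂ) 3, ∀ α ∈ Metric.ball (0 : ℂ) 3,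
      ∀ β ∈ Metric.ball (0 : ℂ) 3,
      κ₀⁻¹ * ‖α - β‖ ≤ ‖φ α t - φ β t‖ ∧
        ‖φ α t - φ β t‖ ≤ κ₀ * ‖α - β‖) :
    -- (1) bounded area on compact sets, uniformly for |ζ₁| ≤ |λ|⁻¹
    (∀ K : Set (ℂ × ℂ × ℂ × ℂ), IsCompact K →
      ∃ C : ℝ, 0 < C ∧
        ∀ lam : ℂ, 1 ≤ ‖lam‖ →
          ∀ ζ₁ ζ₂ : ℂ, ζ₂ ∈ Metric.ball (0 : ℂ) 3 → ζ₁ + ζ₂ ∈ Metric.ball (0 : ℂ) 3 →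
            ‖ζ₁‖ ≤ (‖lam‖)⁻¹ →
            (∫⁻ p in {p : ℂ × ℂ | ‖p.1‖ < 1 ∧ ‖p.2‖ < 1 ∧
                Psi φ lam ζ₁ ζ₂ p.1 p.2 ∈ K},
              ENNReal.ofReal (areaJac φ lam ζ₁ ζ₂ p.1 p.2)) ≤ ENNReal.ofReal C) ∧
    -- (2) a ball W around the origin avoided when |ζ₁| > |λ|⁻¹
    (∃ r : ℝ, 0 < r ∧
      ∀ lam : ℂ, 1 ≤ ‖lam‖ →
        ∀ ζ₁ ζ₂ : ℂ, ζ₂ ∈ Metric.ball (0 : ℂ) 3 → ζ₁ + ζ₂ ∈ Metric.ball (0 : ℂ) 3 →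
          (‖lam‖)⁻¹ < ‖ζ₁‖ →
          ∀ z₁ ∈ Metric.ball (0 : ℂ) 1, ∀ w₁ ∈ Metric.ball (0 : ℂ) 1,
            Psi φ lam ζ₁ ζ₂ z₁ w₁ ∉ Metric.ball (0 : ℂ × ℂ × ℂ × ℂ) r) :=
  stmt17_general κ₀ hκ₀ φ hhol hmaps hlip
end
end
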